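/- Let X be an m×n complex matrix. Then the following are equivalent: (1) for every natural number l, every γ ∈ ℂᵐ, every l×m complex matrix L, and every l×n complex matrix R with ‖γ‖₂ · ‖L‖_c · ‖R‖_c ≤ 1, one has |Tr((Δ_m(γ) Lᴴ R)ᴴ X)| ≤ 1; (2) there exist an m×n complex matrix C and ξ ∈ ℂⁿ such that X = C Δ_n(ξ) and ‖C‖_∞ · ‖ξ‖₂ ≤ 1. -/

import Mathlib

/-!
Direction (2) ⇒ (1) is Cauchy–Schwarz, twice. For (1) ⇒ (2), testing (1) against a suitable triple
`γ, L, R` built from a family of vectors `v_t` whose columns have Euclidean norm `≤ 1` gives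
`∑ₜ ‖X vₜ‖² ≤ 1`. By Hahn–Banach (Pietsch domination) this produces weights `ρ_j ≥ 0` with
`∑ ρ_j ≤ 1` and `‖X v‖² ≤ ∑ ρ_j |v_j|²` for all `v`. Then `X = C Δ(√ρ)` with `C = X Δ(√ρ)⁻¹`,
which is a contraction by the domination inequality.
-/

open Matrix BigOperators

/-- The ℓ²→ℓ² operator norm of a complex matrix. -/
noncomputable def opNorm {m n : ℕ} (A : Matrix (Fin m) (Fin n) ℂ) : ℝ :=
  ‖(Matrix.toEuclideanLin A).toContinuousLinearMap‖

/-- The Euclidean norm of a complex vector. -/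
noncomputable def eNorm {n : ℕ} (ξ : Fin n → ℂ) : ℝ :=
  Real.sqrt (∑ j, ‖ξ j‖ ^ 2)

/-- The column norm: the maximum Euclidean norm of a column. -/
noncomputable def colNorm {l m : ℕ} (L : Matrix (Fin l) (Fin m) ℂ) : ℝ :=
  ⨆ j : Fin m, Real.sqrt (∑ i, ‖L i j‖ ^ 2)

lemma exists_pos_lt_one_forall_le {κ : Type*} [Finite κ] {c : κ → ℝ} (hc : ∀ j, c j < 1) :
    ∃ M, 0 < M ∧ M < 1 ∧ ∀ j, c j ≤ M := by
  rcases isEmpty_or_nonempty κ with _ | _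
  · exact ⟨1 / 2, by norm_num, by norm_num, isEmptyElim⟩
  · obtain ⟨j₀, hj₀⟩ := Finite.exists_max c
    exact ⟨max (c j₀) (1 / 2), by positivity, max_lt (hc j₀) (by norm_num),
      fun j => (hj₀ j).trans (le_max_left _ _)⟩

section Domination

variable {ι κ : Type*} [Fintype κ] (φ : ι → ℝ) (a : ι → κ → ℝ)

lemma disjoint_convexHull_of_forall_sum_le_one
    (h : ∀ (τ : Type) [Fintype τ] (p : τ → ι) (w : τ → ℝ), (∀ k, 0 ≤ w k) →
      (∀ j, ∑ k, w k * a (p k) j ≤ 1) → ∑ k, w k * φ (p k) ≤ 1) :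
    Disjoint (Set.univ.pi fun _ : κ => Set.Iio (1 : ℝ))
      (convexHull ℝ ((fun i => (φ i)⁻¹ • a i) '' {i | 0 < φ i})) := by
  refine Set.disjoint_right.2 fun c hc hc1 => ?_
  obtain ⟨τ, _, w, z, hw0, hw1, hz, rfl⟩ := mem_convexHull_iff_exists_fintype.1 hc
  choose p hp hpz using hz
  replace hp : ∀ k, 0 < φ (p k) := hp
  obtain rfl : z = fun k => (φ (p k))⁻¹ • a (p k) := funext fun k => (hpz k).symm
  obtain ⟨M, hM0, hM1, hcM⟩ := exists_pos_lt_one_forall_le fun j => hc1 j trivial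
  have hw : ∀ k, 0 ≤ w k / (M * φ (p k)) := fun k =>
    div_nonneg (hw0 k) (mul_nonneg hM0.le (hp k).le)
  have key := h τ p _ hw fun j => by
    have := hcM j
    simp only [Finset.sum_apply, Pi.smul_apply, smul_eq_mul] at this
    calc ∑ k, w k / (M * φ (p k)) * a (p k) j = (∑ k, w k * ((φ (p k))⁻¹ * a (p k) j)) / M := by
          rw [Finset.sum_div]
          exact Finset.sum_congr rfl fun k _ => by field_simp
      _ ≤ 1 := (div_le_one hM0).2 this
  have : ∑ k, w k / (M * φ (p k)) * φ (p k) = M⁻¹ := by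
    rw [← one_div, ← hw1, Finset.sum_div]
    exact Finset.sum_congr rfl fun k _ => by field_simp [(hp k).ne']
  rw [this, inv_le_one₀ hM0] at key
  linarith

-- Finite-dimensional Pietsch domination.
theorem exists_dominating_weights (ha : ∀ i j, 0 ≤ a i j)
    (h : ∀ (τ : Type) [Fintype τ] (p : τ → ι) (w : τ → ℝ), (∀ k, 0 ≤ w k) →
      (∀ j, ∑ k, w k * a (p k) j ≤ 1) → ∑ k, w k * φ (p k) ≤ 1) :
    ∃ ρ : κ → ℝ, (∀ j, 0 ≤ ρ j) ∧ ∑ j, ρ j ≤ 1 ∧ ∀ i, φ i ≤ ∑ j, ρ j * a i j := by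
  classical
  obtain ⟨f, u, hfO, hfS⟩ := geometric_hahn_banach_open (convex_pi fun _ _ => convex_Iio 1)
    (isOpen_set_pi Set.finite_univ fun _ _ => isOpen_Iio) (convex_convexHull ℝ _)
    (disjoint_convexHull_of_forall_sum_le_one φ a h)
  set e : κ → κ → ℝ := fun j j' => if j = j' then 1 else 0
  have hf : ∀ c, f c = ∑ j, c j * f (e j) := fun c => by
    simpa using f.toLinearMap.pi_apply_eq_sum_univ c
  have hu : 0 < u := by simpa using hfO 0 fun _ _ => by simp
  have hg : ∀ j, 0 ≤ f (e j) := fun j => by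
    by_contra! hneg
    have hej : ∀ j', 0 ≤ e j j' := fun j' => by simp only [e]; split_ifs <;> norm_num
    have := hfO ((u / f (e j)) • e j) fun j' _ =>
      (mul_nonpos_of_nonpos_of_nonneg (div_neg_of_pos_of_neg hu hneg).le (hej j')).trans_lt one_pos
    rw [map_smul, smul_eq_mul, div_mul_cancel₀ _ hneg.ne] at this
    exact lt_irrefl _ this
  have hsum : ∑ j, f (e j) ≤ u := by
    by_contra! hlt
    have hpos : 0 < ∑ j, f (e j) := hu.trans hlt
    have := hfO ((u / ∑ j, f (e j)) • (1 : κ → ℝ)) fun j _ => by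
      simpa using (div_lt_one hpos).2 hlt
    simp only [map_smul, hf 1, Pi.one_apply, one_mul, smul_eq_mul,
      div_mul_cancel₀ _ hpos.ne'] at this
    exact lt_irrefl _ this
  refine ⟨fun j => f (e j) / u, fun j => div_nonneg (hg j) hu.le, ?_, fun i => ?_⟩
  · rw [← Finset.sum_div, div_le_one hu]
    exact hsum
  rcases le_or_gt (φ i) 0 with hi | hi
  · exact hi.trans (Finset.sum_nonneg fun j _ => mul_nonneg (div_nonneg (hg j) hu.le) (ha i j))
  have := hfS _ (subset_convexHull ℝ _ ⟨i, hi, rfl⟩)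
  rw [map_smul, smul_eq_mul, hf, le_inv_mul_iff₀ hi, ← le_div_iff₀ hu, Finset.sum_div] at this
  exact this.trans_eq (Finset.sum_congr rfl fun j _ => by ring)

end Domination

section Matrices

variable {l m n : ℕ}

lemma eNorm_nonneg (ξ : Fin n → ℂ) : 0 ≤ eNorm ξ := Real.sqrt_nonneg _

lemma sq_eNorm (ξ : Fin n → ℂ) : eNorm ξ ^ 2 = ∑ j, ‖ξ j‖ ^ 2 :=
  Real.sq_sqrt (Finset.sum_nonneg fun _ _ => sq_nonneg _)

lemma norm_sum_mul_le_eNorm_mul_eNorm (x y : Fin n → ℂ) :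
    ‖∑ i, x i * y i‖ ≤ eNorm x * eNorm y :=
  calc ‖∑ i, x i * y i‖ ≤ ∑ i, ‖x i‖ * ‖y i‖ := by
        simpa only [norm_mul] using norm_sum_le Finset.univ fun i => x i * y i
    _ ≤ eNorm x * eNorm y := Real.sum_mul_le_sqrt_mul_sqrt _ _ _

lemma eNorm_eq_norm_toLp (ξ : Fin n → ℂ) : eNorm ξ = ‖WithLp.toLp 2 ξ‖ :=
  (EuclideanSpace.norm_eq _).symm

lemma eNorm_smul (c : ℂ) (ξ : Fin n → ℂ) : eNorm (c • ξ) = ‖c‖ * eNorm ξ := by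
  simp only [eNorm_eq_norm_toLp, WithLp.toLp_smul, norm_smul]

lemma eNorm_mulVec_le (A : Matrix (Fin m) (Fin n) ℂ) (v : Fin n → ℂ) :
    eNorm (A *ᵥ v) ≤ opNorm A * eNorm v := by
  simpa [EuclideanSpace.norm_eq, opNorm, eNorm] using
    (Matrix.toEuclideanLin A).toContinuousLinearMap.le_opNorm (WithLp.toLp 2 v)

lemma opNorm_le_of_eNorm_mulVec_le (A : Matrix (Fin m) (Fin n) ℂ) {c : ℝ} (hc : 0 ≤ c)
    (h : ∀ v, eNorm (A *ᵥ v) ≤ c * eNorm v) : opNorm A ≤ c :=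
  ContinuousLinearMap.opNorm_le_bound _ hc fun x => by
    simpa [EuclideanSpace.norm_eq, eNorm] using h x.ofLp

lemma colNorm_nonneg (L : Matrix (Fin l) (Fin m) ℂ) : 0 ≤ colNorm L :=
  Real.iSup_nonneg fun _ => Real.sqrt_nonneg _

lemma sum_sq_norm_le_sq_colNorm (L : Matrix (Fin l) (Fin m) ℂ) (j : Fin m) :
    ∑ i, ‖L i j‖ ^ 2 ≤ colNorm L ^ 2 :=
  Real.sqrt_le_iff.1 (le_ciSup (f := fun j => Real.sqrt (∑ i, ‖L i j‖ ^ 2))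
    (Set.finite_range _).bddAbove j) |>.2

lemma colNorm_le_of_sum_sq_norm_le (L : Matrix (Fin l) (Fin m) ℂ) {c : ℝ} (hc : 0 ≤ c)
    (h : ∀ j, ∑ i, ‖L i j‖ ^ 2 ≤ c ^ 2) : colNorm L ≤ c :=
  Real.iSup_le (fun j => Real.sqrt_le_iff.2 ⟨hc, h j⟩) hc

lemma colNorm_map_star (L : Matrix (Fin l) (Fin m) ℂ) : colNorm (L.map star) = colNorm L := by
  simp [colNorm]

lemma sqrt_sum_sq_eNorm_le {γ : Fin m → ℂ} {L : Matrix (Fin l) (Fin m) ℂ}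
    (α : Fin l → Fin m → ℂ) (hα : ∀ t i, ‖α t i‖ = ‖γ i‖ * ‖L t i‖) :
    Real.sqrt (∑ t, eNorm (α t) ^ 2) ≤ eNorm γ * colNorm L := by
  refine Real.sqrt_le_iff.2 ⟨mul_nonneg (eNorm_nonneg γ) (colNorm_nonneg L), ?_⟩
  calc ∑ t, eNorm (α t) ^ 2 = ∑ i, ‖γ i‖ ^ 2 * ∑ t, ‖L t i‖ ^ 2 := by
        simp only [sq_eNorm, hα, mul_pow, Finset.mul_sum]
        exact Finset.sum_comm
    _ ≤ ∑ i, ‖γ i‖ ^ 2 * colNorm L ^ 2 := by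
        gcongr with i
        exact sum_sq_norm_le_sq_colNorm L i
    _ = (eNorm γ * colNorm L) ^ 2 := by rw [← Finset.sum_mul, mul_pow, sq_eNorm]

lemma trace_conjTranspose_diagonal_mul_mul (γ : Fin m → ℂ)
    (L : Matrix (Fin l) (Fin m) ℂ) (R : Matrix (Fin l) (Fin n) ℂ) (X : Matrix (Fin m) (Fin n) ℂ) :
    ((diagonal γ * (Lᴴ * R))ᴴ * X).trace = ∑ t, ∑ i, star (γ i) * L t i * (X *ᵥ star (R t)) i := by
  rw [conjTranspose_mul, conjTranspose_mul, conjTranspose_conjTranspose, diagonal_conjTranspose,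
    Matrix.mul_assoc, Matrix.mul_assoc, trace_mul_comm, ← Matrix.mul_assoc, Matrix.mul_assoc]
  simp only [trace, diag_apply, mul_apply, diagonal_apply, mul_ite, mul_zero, Finset.sum_ite_eq',
    Finset.mem_univ, if_true, mulVec, dotProduct, conjTranspose_apply, Pi.star_apply,
    Finset.mul_sum]
  exact Finset.sum_congr rfl fun _ _ => Finset.sum_congr rfl fun _ _ => Finset.sum_congr rfl
    fun _ _ => by ring

lemma norm_trace_mul_diagonal_le (γ : Fin m → ℂ) (L : Matrix (Fin l) (Fin m) ℂ)
    (R : Matrix (Fin l) (Fin n) ℂ) (C : Matrix (Fin m) (Fin n) ℂ) (ξ : Fin n → ℂ) :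
    ‖((diagonal γ * (Lᴴ * R))ᴴ * (C * diagonal ξ)).trace‖
      ≤ opNorm C * eNorm ξ * (eNorm γ * colNorm L * colNorm R) := by
  set α : Fin l → Fin m → ℂ := fun t i => star (γ i) * L t i
  set β : Fin l → Fin n → ℂ := fun t j => ξ j * star (R t j)
  have hβ : ∀ t, (C * diagonal ξ) *ᵥ star (R t) = C *ᵥ β t := fun t => by
    rw [← mulVec_mulVec]
    congr 1
    ext j
    simp [β, mulVec_diagonal]
  have hαL : Real.sqrt (∑ t, eNorm (α t) ^ 2) ≤ eNorm γ * colNorm L :=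
    sqrt_sum_sq_eNorm_le α fun t i => by simp [α]
  have hβR : Real.sqrt (∑ t, eNorm (β t) ^ 2) ≤ eNorm ξ * colNorm (R.map star) :=
    sqrt_sum_sq_eNorm_le β fun t i => by simp [β]
  rw [colNorm_map_star] at hβR
  rw [trace_conjTranspose_diagonal_mul_mul]
  calc ‖∑ t, ∑ i, α t i * ((C * diagonal ξ) *ᵥ star (R t)) i‖
      ≤ ∑ t, eNorm (α t) * eNorm (C *ᵥ β t) := by
        refine (norm_sum_le _ _).trans (Finset.sum_le_sum fun t _ => ?_)
        rw [hβ]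
        exact norm_sum_mul_le_eNorm_mul_eNorm _ _
    _ ≤ ∑ t, eNorm (α t) * (opNorm C * eNorm (β t)) := by
        gcongr with t
        · exact eNorm_nonneg _
        · exact eNorm_mulVec_le C (β t)
    _ = opNorm C * ∑ t, eNorm (α t) * eNorm (β t) := by
        rw [Finset.mul_sum]
        exact Finset.sum_congr rfl fun _ _ => by ring
    _ ≤ opNorm C * (Real.sqrt (∑ t, eNorm (α t) ^ 2) * Real.sqrt (∑ t, eNorm (β t) ^ 2)) := by
        gcongr
        · exact norm_nonneg _
        · exact Real.sum_mul_le_sqrt_mul_sqrt _ _ _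
    _ ≤ opNorm C * ((eNorm γ * colNorm L) * (eNorm ξ * colNorm R)) := by
        gcongr
        · exact norm_nonneg _
        · exact (Real.sqrt_nonneg _).trans hαL
    _ = opNorm C * eNorm ξ * (eNorm γ * colNorm L * colNorm R) := by ring

-- `γ` and `L` normalise the column norms and the conjugated columns of `W`; zero columns are
-- handled by `x / 0 = 0`.
lemma exists_sum_sum_mul_eq_sqrt (W : Fin l → Fin m → ℂ) (hW : 0 < ∑ t, eNorm (W t) ^ 2) :
    ∃ (γ : Fin m → ℂ) (L : Matrix (Fin l) (Fin m) ℂ), eNorm γ ≤ 1 ∧ colNorm L ≤ 1 ∧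
      ∑ t, ∑ i, star (γ i) * L t i * W t i = Real.sqrt (∑ t, eNorm (W t) ^ 2) := by
  set T := ∑ t, eNorm (W t) ^ 2
  set s := Real.sqrt T
  have hs : 0 < s := Real.sqrt_pos.2 hW
  set r : Fin m → ℝ := fun i => Real.sqrt (∑ t, ‖W t i‖ ^ 2)
  have hr : ∀ i, r i ^ 2 = ∑ t, ‖W t i‖ ^ 2 := fun i =>
    Real.sq_sqrt (Finset.sum_nonneg fun _ _ => sq_nonneg _)
  have hT : T = ∑ i, r i ^ 2 := by
    simp only [T, sq_eNorm, hr]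
    exact Finset.sum_comm
  refine ⟨fun i => ((r i / s : ℝ) : ℂ), of fun t i => star (W t i) / (r i : ℂ), ?_, ?_, ?_⟩
  · rw [eNorm, Real.sqrt_le_one]
    simp only [Complex.norm_real, Real.norm_eq_abs, sq_abs, div_pow, ← Finset.sum_div, ← hT, s,
      Real.sq_sqrt hW.le]
    exact div_self_le_one T
  · refine colNorm_le_of_sum_sq_norm_le _ zero_le_one fun i => ?_
    simp only [of_apply, norm_div, norm_star, Complex.norm_real, Real.norm_eq_abs, div_pow,
      sq_abs, ← Finset.sum_div, ← hr, one_pow]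
    exact div_self_le_one _
  have hterm : ∀ t i, star ((r i / s : ℝ) : ℂ) * (star (W t i) / (r i : ℂ)) * W t i
      = ((r i / s / r i * ‖W t i‖ ^ 2 : ℝ) : ℂ) := fun t i => by
    rw [Complex.star_def, Complex.conj_ofReal, mul_div_assoc', div_mul_eq_mul_div, mul_assoc,
      Complex.conj_mul']
    push_cast
    ring
  simp only [of_apply, hterm]
  norm_cast
  rw [Finset.sum_comm]
  simp only [← Finset.mul_sum, ← hr]
  calc ∑ i, r i / s / r i * r i ^ 2 = (∑ i, r i ^ 2) / s := by
        rw [Finset.sum_div]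
        refine Finset.sum_congr rfl fun i _ => ?_
        rcases eq_or_ne (r i) 0 with h | h
        · simp [h]
        · field_simp
    _ = s := by rw [← hT, div_eq_iff hs.ne', Real.mul_self_sqrt hW.le]

lemma sum_sq_eNorm_mulVec_le_one {X : Matrix (Fin m) (Fin n) ℂ}
    (hX : ∀ (l : ℕ) (γ : Fin m → ℂ) (L : Matrix (Fin l) (Fin m) ℂ) (R : Matrix (Fin l) (Fin n) ℂ),
      eNorm γ * colNorm L * colNorm R ≤ 1 → ‖((diagonal γ * (Lᴴ * R))ᴴ * X).trace‖ ≤ 1)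
    {l : ℕ} (V : Matrix (Fin l) (Fin n) ℂ) (hV : colNorm V ≤ 1) :
    ∑ t, eNorm (X *ᵥ V t) ^ 2 ≤ 1 := by
  set T := ∑ t, eNorm (X *ᵥ V t) ^ 2
  rcases (show 0 ≤ T from Finset.sum_nonneg fun t _ => sq_nonneg _).eq_or_lt with hT0 | hT0
  · exact hT0 ▸ zero_le_one
  obtain ⟨γ, L, hγ, hL, hpair⟩ := exists_sum_sum_mul_eq_sqrt (fun t => X *ᵥ V t) hT0
  have hR : colNorm (V.map star) ≤ 1 := (colNorm_map_star V).trans_le hV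
  have htrace : ((diagonal γ * (Lᴴ * V.map star))ᴴ * X).trace = (Real.sqrt T : ℂ) := by
    have hV' : ∀ t, star ((V.map star) t) = V t := fun t => by ext; simp
    rw [trace_conjTranspose_diagonal_mul_mul]
    simpa only [hV'] using hpair
  have := hX l γ L (V.map star)
    (mul_le_one₀ (mul_le_one₀ hγ (colNorm_nonneg L) hL) (colNorm_nonneg _) hR)
  rwa [htrace, Complex.norm_real, Real.norm_of_nonneg (Real.sqrt_nonneg _), Real.sqrt_le_one]
    at this

lemma sum_mul_sq_eNorm_mulVec_le_one {X : Matrix (Fin m) (Fin n) ℂ}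
    (hX : ∀ (l : ℕ) (V : Matrix (Fin l) (Fin n) ℂ), colNorm V ≤ 1 → ∑ t, eNorm (X *ᵥ V t) ^ 2 ≤ 1)
    (τ : Type) [Fintype τ] (p : τ → Fin n → ℂ) (w : τ → ℝ) (hw : ∀ k, 0 ≤ w k)
    (hpw : ∀ j, ∑ k, w k * ‖p k j‖ ^ 2 ≤ 1) :
    ∑ k, w k * eNorm (X *ᵥ p k) ^ 2 ≤ 1 := by
  set e := (Fintype.equivFin τ).symm
  set c : τ → ℂ := fun k => (Real.sqrt (w k) : ℂ)
  have hc : ∀ k, ‖c k‖ ^ 2 = w k := fun k => by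
    simp [c, Real.sq_sqrt (hw k)]
  set V : Matrix (Fin (Fintype.card τ)) (Fin n) ℂ := of fun t => c (e t) • p (e t)
  have hVt : ∀ t, V t = c (e t) • p (e t) := fun _ => rfl
  have hV : colNorm V ≤ 1 := colNorm_le_of_sum_sq_norm_le V zero_le_one fun j => by
    simpa [hVt, mul_pow, hc, e.sum_comp fun k => w k * ‖p k j‖ ^ 2] using hpw j
  simpa [hVt, mulVec_smul, eNorm_smul, mul_pow, hc, e.sum_comp fun k => w k * eNorm (X *ᵥ p k) ^ 2]
    using hX _ V hV

lemma exists_eq_mul_diagonal_of_sq_eNorm_mulVec_le (X : Matrix (Fin m) (Fin n) ℂ)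
    {ρ : Fin n → ℝ} (hρ0 : ∀ j, 0 ≤ ρ j) (hρ1 : ∑ j, ρ j ≤ 1)
    (hdom : ∀ v, eNorm (X *ᵥ v) ^ 2 ≤ ∑ j, ρ j * ‖v j‖ ^ 2) :
    ∃ (C : Matrix (Fin m) (Fin n) ℂ) (ξ : Fin n → ℂ),
      X = C * diagonal ξ ∧ opNorm C * eNorm ξ ≤ 1 := by
  set ξ : Fin n → ℂ := fun j => (Real.sqrt (ρ j) : ℂ)
  -- `(√0)⁻¹ = 0` is harmless: the columns of `X` with `ρ j = 0` vanish.
  set η : Fin n → ℂ := fun j => ((Real.sqrt (ρ j))⁻¹ : ℝ)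
  have hcol : ∀ i j, ρ j = 0 → X i j = 0 := fun i j hj => by
    have h0 : ∑ i, ‖X i j‖ ^ 2 ≤ 0 := by
      simpa [sq_eNorm, Pi.single_apply, apply_ite, hj] using hdom (Pi.single j 1)
    have hle := (Finset.single_le_sum (fun i _ => sq_nonneg ‖X i j‖) (Finset.mem_univ i)).trans h0
    simpa using hle
  refine ⟨X * diagonal η, ξ, ?_, ?_⟩
  · ext i j
    rw [Matrix.mul_assoc, diagonal_mul_diagonal, mul_diagonal]
    rcases eq_or_ne (ρ j) 0 with hj | hj
    · simp [hcol i j hj]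
    · simp [η, ξ, Real.sqrt_ne_zero'.2 ((hρ0 j).lt_of_ne' hj)]
  have hξ : eNorm ξ ≤ 1 := by
    rw [eNorm, Real.sqrt_le_one]
    simpa [ξ, Real.sq_sqrt (hρ0 _)] using hρ1
  have hC : opNorm (X * diagonal η) ≤ 1 := opNorm_le_of_eNorm_mulVec_le _ zero_le_one fun v => by
    rw [one_mul, ← mulVec_mulVec,
      ← pow_le_pow_iff_left₀ (eNorm_nonneg _) (eNorm_nonneg _) two_ne_zero, sq_eNorm v]
    refine (hdom _).trans (Finset.sum_le_sum fun j _ => ?_)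
    simp only [mulVec_diagonal, norm_mul, η, Complex.norm_real, Real.norm_eq_abs, mul_pow, sq_abs,
      inv_pow, Real.sq_sqrt (hρ0 j), ← mul_assoc, ← div_eq_mul_inv]
    exact mul_le_of_le_one_left (sq_nonneg _) (div_self_le_one _)
  exact mul_le_one₀ hC (eNorm_nonneg ξ) hξ

end Matrices

/-- Duality: `X` pairs to at most `1` against all `Δ_m(γ) Lᴴ R` with
`‖γ‖₂‖L‖_c‖R‖_c ≤ 1` iff `X = C Δ_n(ξ)` with `‖C‖_∞‖ξ‖₂ ≤ 1`. -/
theorem cb_F_ball_eq_polar_of_T_ball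
    (m n : ℕ) (X : Matrix (Fin m) (Fin n) ℂ) :
    (∀ (l : ℕ) (γ : Fin m → ℂ) (L : Matrix (Fin l) (Fin m) ℂ)
        (R : Matrix (Fin l) (Fin n) ℂ),
        eNorm γ * colNorm L * colNorm R ≤ 1 →
        ‖((Matrix.diagonal γ * (Lᴴ * R))ᴴ * X).trace‖ ≤ 1) ↔
      (∃ (C : Matrix (Fin m) (Fin n) ℂ) (ξ : Fin n → ℂ),
        X = C * Matrix.diagonal ξ ∧ opNorm C * eNorm ξ ≤ 1) := by
  constructor
  · intro hX
    obtain ⟨ρ, hρ0, hρ1, hdom⟩ := exists_dominating_weights (fun v => eNorm (X *ᵥ v) ^ 2)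
      (fun v j => ‖v j‖ ^ 2) (fun _ _ => sq_nonneg _)
      (sum_mul_sq_eNorm_mulVec_le_one fun _ V => sum_sq_eNorm_mulVec_le_one hX V)
    exact exists_eq_mul_diagonal_of_sq_eNorm_mulVec_le X hρ0 hρ1 hdom
  · rintro ⟨C, ξ, rfl, hCξ⟩ l γ L R hγLR
    exact (norm_trace_mul_diagonal_le γ L R C ξ).trans (mul_le_one₀ hCξ
      (mul_nonneg (mul_nonneg (eNorm_nonneg γ) (colNorm_nonneg L)) (colNorm_nonneg R)) hγLR)
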